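/- arXiv:1501.04256 — 2 statements merged into one kernel-verified Lean document; each statement's English description precedes it below -/
import Mathlib

section
/- Define the geometric polynomial ω_m(x) = sum_{n=0}^m S(m,n) * n! * x^n. Then for every nonnegative integer m, ω_m(-1/2) = sum_{p=0}^m S(m,p) * p! * (-1/2)^p = 2*(1 - 2^{m+1})*B_{m+1}/(m+1), where B_{m+1} is the Bernoulli number. -/
/-!
The exponential generating function of `ω_m(x)` is `1 / (1 - x (eᵗ - 1))`, which at `x = -1/2`
is `2 / (eᵗ + 1)`. On the other hand `t / (eᵗ - 1) - 2t / (e²ᵗ - 1) = t / (eᵗ + 1)`, so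
`2t / (eᵗ + 1)` is the generating function of the Genocchi numbers `2 (1 - 2ⁿ) Bₙ`; comparing
the coefficients of `tᵐ⁺¹ / (m + 1)!` gives the claim.
-/

/-- Stirling numbers of the second kind, via the standard recurrence. -/
def stirling2 : ℕ → ℕ → ℕ
  | 0, 0 => 1
  | 0, _ + 1 => 0
  | _ + 1, 0 => 0
  | m + 1, n + 1 => (n + 1) * stirling2 m (n + 1) + stirling2 m n

open Finset PowerSeries Nat

theorem stirling2_eq_stirlingSecond : stirling2 = stirlingSecond := by
  funext m n
  induction m generalizing n with
  | zero => cases n <;> rfl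
  | succ m ih => cases n <;> simp [stirling2, stirlingSecond_succ_succ, ih]

theorem Nat.stirlingSecond_succ_succ_eq_sum_choose (m p : ℕ) :
    stirlingSecond (m + 1) (p + 1) = ∑ k ∈ range (m + 1), m.choose k * stirlingSecond k p := by
  induction m generalizing p with
  | zero => cases p <;> simp [stirlingSecond_succ_succ, stirlingSecond_eq_zero_of_lt]
  | succ m ih =>
    have pascal : ∑ k ∈ range (m + 2), (m + 1).choose k * stirlingSecond k p =
        stirlingSecond (m + 1) (p + 1) +
          ∑ k ∈ range (m + 1), m.choose k * stirlingSecond (k + 1) p := by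
      rw [sum_range_succ', ih, sum_range_succ' (fun k => m.choose k * stirlingSecond k p)]
      simp only [choose_succ_succ, add_mul, sum_add_distrib, choose_zero_right]
      rw [sum_range_succ (fun k => m.choose (k + 1) * _), choose_succ_self, zero_mul, add_zero]
      ring
    rw [pascal]
    cases p with
    | zero => simp [stirlingSecond_succ_succ]
    | succ q =>
      simp only [stirlingSecond_succ_succ, mul_add, sum_add_distrib, mul_left_comm _ (q + 1),
        ← mul_sum, ← ih]
      ring

section GeometricPolynomial

variable {R : Type*} [CommRing R]

def geometricPoly (m : ℕ) (x : R) : R :=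
  ∑ p ∈ range (m + 1), (stirlingSecond m p : R) * (p ! : R) * x ^ p

theorem geometricPoly_eq_sum_range {m N : ℕ} (h : m ≤ N) (x : R) :
    geometricPoly m x = ∑ p ∈ range (N + 1), (stirlingSecond m p : R) * (p ! : R) * x ^ p := by
  refine sum_subset (range_subset_range.mpr (by omega)) fun p _ hp => ?_
  rw [stirlingSecond_eq_zero_of_lt (by simp at hp; omega), Nat.cast_zero, zero_mul, zero_mul]

theorem sum_choose_mul_geometricPoly (m : ℕ) (x : R) :
    ∑ k ∈ range (m + 1), (m.choose k : R) * geometricPoly k x =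
      ∑ p ∈ range (m + 1), (stirlingSecond (m + 1) (p + 1) : R) * (p ! : R) * x ^ p := by
  simp only [stirlingSecond_succ_succ_eq_sum_choose, Nat.cast_sum, Nat.cast_mul, sum_mul]
  rw [sum_comm]
  refine sum_congr rfl fun k hk => ?_
  rw [geometricPoly_eq_sum_range (Nat.lt_succ_iff.mp (mem_range.mp hk)), mul_sum]
  exact sum_congr rfl fun p _ => by ring

theorem mul_sum_choose_mul_geometricPoly (m : ℕ) (x : R) :
    x * ∑ k ∈ range (m + 2), ((m + 1).choose k : R) * geometricPoly k x =
      (1 + x) * geometricPoly (m + 1) x := by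
  have term (p : ℕ) : x * ((stirlingSecond (m + 2) (p + 1) : R) * (p ! : R) * x ^ p) =
      (stirlingSecond (m + 1) (p + 1) : R) * ((p + 1) ! : R) * x ^ (p + 1) +
        x * ((stirlingSecond (m + 1) p : R) * (p ! : R) * x ^ p) := by
    rw [stirlingSecond_succ_succ, factorial_succ]
    push_cast
    ring
  have shift : ∑ p ∈ range (m + 2),
      (stirlingSecond (m + 1) (p + 1) : R) * ((p + 1) ! : R) * x ^ (p + 1) =
        geometricPoly (m + 1) x := by
    rw [geometricPoly_eq_sum_range (Nat.le_succ _), sum_range_succ' _ (m + 2),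
      sum_range_succ _ (m + 1), stirlingSecond_eq_zero_of_lt (by omega)]
    simp
  rw [sum_choose_mul_geometricPoly, mul_sum]
  simp only [term, sum_add_distrib, shift, ← mul_sum]
  rw [← geometricPoly]
  ring

end GeometricPolynomial

section ExponentialGeneratingFunction

variable {A : Type*} [CommRing A] [Algebra ℚ A]

def egf (a : ℕ → A) : A⟦X⟧ :=
  mk fun n => algebraMap ℚ A (1 / n !) * a n

@[simp]
theorem coeff_egf (a : ℕ → A) (n : ℕ) : coeff n (egf a) = algebraMap ℚ A (1 / n !) * a n :=
  coeff_mk _ _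

theorem egf_injective : Function.Injective (egf : (ℕ → A) → A⟦X⟧) := by
  intro a b h
  funext n
  have hunit : IsUnit (algebraMap ℚ A (1 / n !)) := (isUnit_iff_ne_zero.mpr (by positivity)).map _
  exact hunit.mul_right_inj.mp (by rw [← coeff_egf, ← coeff_egf, h])

theorem exp_mul_egf (a : ℕ → A) :
    exp A * egf a = egf fun m => ∑ k ∈ range (m + 1), (m.choose k : A) * a k := by
  ext m
  rw [coeff_mul, ← Nat.sum_antidiagonal_swap, Nat.sum_antidiagonal_eq_sum_range_succ_mk,
    coeff_egf, mul_sum]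
  refine sum_congr rfl fun k hk => ?_
  have hkm : k ≤ m := Nat.lt_succ_iff.mp (mem_range.mp hk)
  simp only [Prod.swap_prod_mk, coeff_exp, coeff_egf, ← map_natCast (algebraMap ℚ A), ← mul_assoc,
    ← map_mul]
  congr 2
  rw [Nat.cast_choose ℚ hkm]
  field_simp

theorem X_mul_egf (a : ℕ → A) : X * egf a = egf fun n => n * a (n - 1) := by
  ext n
  cases n with
  | zero => simp
  | succ n =>
    rw [coeff_succ_X_mul, coeff_egf, coeff_egf, ← map_natCast (algebraMap ℚ A), ← mul_assoc,
      ← map_mul, Nat.add_sub_cancel, factorial_succ]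
    congr 2
    push_cast
    field_simp

theorem egf_geometricPoly (x : A) :
    (1 - C x * (exp A - 1)) * egf (fun m => geometricPoly m x) = 1 := by
  rw [sub_mul, one_mul, mul_assoc, sub_mul, one_mul, exp_mul_egf]
  ext m
  simp only [map_sub, coeff_C_mul, coeff_egf, coeff_one]
  cases m with
  | zero => simp [geometricPoly]
  | succ m =>
    have h := mul_sum_choose_mul_geometricPoly m x
    rw [if_neg m.succ_ne_zero]
    linear_combination -(algebraMap ℚ A (1 / (m + 1)!)) * h

end ExponentialGeneratingFunction

def genocchi (n : ℕ) : ℚ := 2 * (1 - 2 ^ n) * bernoulli n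

theorem egf_genocchi :
    egf genocchi = 2 * (bernoulliPowerSeries ℚ - rescale 2 (bernoulliPowerSeries ℚ)) := by
  ext n
  rw [← map_ofNat C 2, coeff_C_mul]
  simp only [coeff_egf, genocchi, bernoulliPowerSeries, map_sub, coeff_mk, coeff_rescale,
    Algebra.algebraMap_self, RingHom.id_apply]
  ring

theorem exp_add_one_mul_bernoulliPowerSeries_sub_rescale :
    (exp ℚ + 1) * (bernoulliPowerSeries ℚ - rescale 2 (bernoulliPowerSeries ℚ)) = X := by
  have hne : exp ℚ - 1 ≠ 0 := fun h => by simpa using congrArg (coeff 1) h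
  refine mul_right_cancel₀ hne ?_
  have hexp2 : rescale (2 : ℚ) (exp ℚ) = exp ℚ ^ 2 := by
    exact_mod_cast (exp_pow_eq_rescale_exp 2).symm
  calc _ = (exp ℚ + 1) * X - rescale 2 (bernoulliPowerSeries ℚ * (exp ℚ - 1)) := by
        rw [map_mul, map_sub, map_one, hexp2, ← bernoulliPowerSeries_mul_exp_sub_one]
        ring
    _ = X * (exp ℚ - 1) := by
        rw [bernoulliPowerSeries_mul_exp_sub_one, rescale_X, map_ofNat]
        ring

theorem exp_add_one_mul_egf_genocchi : (exp ℚ + 1) * egf genocchi = 2 * X := by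
  rw [egf_genocchi, mul_left_comm, exp_add_one_mul_bernoulliPowerSeries_sub_rescale]

theorem exp_add_one_ne_zero : exp ℚ + 1 ≠ 0 := fun h => by
  simpa using congrArg constantCoeff h

theorem geometric_poly_at_neg_half (m : ℕ) :
    ∑ p ∈ Finset.range (m + 1), (stirling2 m p : ℚ) * (p.factorial : ℚ) * (-1 / 2) ^ p
      = 2 * (1 - 2 ^ (m + 1)) * bernoulli (m + 1) / (m + 1) := by
  have hC : C (-1 / 2 : ℚ) * 2 = -1 := by
    rw [← map_ofNat C 2, ← map_mul]
    norm_num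
  have hω : (exp ℚ + 1) * egf (fun m => geometricPoly m (-1 / 2 : ℚ)) = 2 := by
    linear_combination 2 * egf_geometricPoly (-1 / 2 : ℚ) +
      (exp ℚ - 1) * egf (fun m => geometricPoly m (-1 / 2 : ℚ)) * hC
  have hX : X * egf (fun m => geometricPoly m (-1 / 2 : ℚ)) = egf genocchi :=
    mul_left_cancel₀ exp_add_one_ne_zero <| by
      rw [mul_left_comm, hω, exp_add_one_mul_egf_genocchi, mul_comm]
  rw [X_mul_egf] at hX
  have hm := congrFun (egf_injective hX) (m + 1)
  rw [Nat.add_sub_cancel, genocchi, Nat.cast_succ] at hm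
  rw [stirling2_eq_stirlingSecond, eq_div_iff (by positivity), mul_comm]
  exact hm
end

section
/- For every real z > 0, the digamma function satisfies ψ(z) = log z + sum over n from 0 to ∞ of 1/(n+1) * (sum over k from 0 to n of binomial(n,k) * (-1)^k * log(1 + k/z)), where the outer series converges. -/
/-!
Both `ψ(z) - log z` and `I(z) = ∫₀^∞ (1/x - 1/(1 - e^{-x})) e^{-zx} dx` change by
`1/z - log(1 + 1/z)` under `z ↦ z + 1` (for `I` by Frullani's integral), and both tend to `0` as
`z → ∞` (for `ψ` by convexity of `log Γ`), so they coincide. With `t = 1 - e^{-x}` one has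
`x = -log (1 - t) = ∑ tⁿ⁺¹/(n+1)`, hence `1/t - 1/x = ∑_{n ≥ 1} tⁿ/((n+1) x)`, a series of
nonnegative functions that may be integrated termwise against `e^{-zx}`. Finally the binomial
theorem turns `e^{-zx} tⁿ/x` into `-∑ₖ C(n,k) (-1)ᵏ (e^{-zx} - e^{-(z+k)x})/x`, whose integral is
`-∑ₖ C(n,k) (-1)ᵏ log (1 + k/z)` by Frullani's integral again.
-/

/-- The digamma function `ψ(z) = Γ'(z)/Γ(z)`. -/
noncomputable def digamma (z : ℝ) : ℝ := deriv Real.Gamma z / Real.Gamma z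

open Real Set Filter Topology MeasureTheory

lemma MeasureTheory.hasSum_integral_of_nonneg {α ι : Type*} [MeasurableSpace α] [Countable ι]
    {μ : Measure α} {F : ι → α → ℝ} {f : α → ℝ} (hF_meas : ∀ n, AEStronglyMeasurable (F n) μ)
    (hF_nonneg : ∀ n, 0 ≤ᵐ[μ] F n) (hf : Integrable f μ)
    (h_lim : ∀ᵐ a ∂μ, HasSum (fun n => F n a) (f a)) :
    HasSum (fun n => ∫ a, F n a ∂μ) (∫ a, f a ∂μ) := by
  have h_norm : ∀ᵐ a ∂μ, ∀ n, ‖F n a‖ = F n a := by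
    filter_upwards [ae_all_iff.2 hF_nonneg] with a ha n using norm_of_nonneg (ha n)
  refine hasSum_integral_of_dominated_convergence F hF_meas
    (fun n => by filter_upwards [h_norm] with a ha using (ha n).le)
    (by filter_upwards [h_lim] with a ha using ha.summable) ?_ h_lim
  exact hf.congr (by filter_upwards [h_lim] with a ha using ha.tsum_eq.symm)

lemma sum_range_choose_mul_neg_one_pow_mul_pow {R : Type*} [CommRing R] (n : ℕ) (u : R) :
    ∑ k ∈ Finset.range (n + 1), (n.choose k : R) * (-1) ^ k * u ^ k = (1 - u) ^ n := by
  rw [sub_eq_neg_add, add_pow]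
  refine Finset.sum_congr rfl fun k _ => ?_
  rw [neg_pow, one_pow]
  ring

lemma sum_range_choose_mul_neg_one_pow_mul_one_sub_pow {R : Type*} [CommRing R] {n : ℕ}
    (hn : n ≠ 0) (u : R) :
    ∑ k ∈ Finset.range (n + 1), (n.choose k : R) * (-1) ^ k * (1 - u ^ k) = -(1 - u) ^ n := by
  have h1 := sum_range_choose_mul_neg_one_pow_mul_pow n (1 : R)
  have hu := sum_range_choose_mul_neg_one_pow_mul_pow n u
  simp only [one_pow, mul_one, sub_self, zero_pow hn] at h1
  simp only [mul_sub, mul_one, Finset.sum_sub_distrib, h1, hu, zero_sub]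

lemma integral_exp_neg_mul_Ioi {z : ℝ} (hz : 0 < z) : ∫ x in Ioi 0, exp (-(z * x)) = z⁻¹ := by
  simpa [neg_mul] using integral_exp_mul_Ioi (neg_lt_zero.2 hz) 0

lemma integrableOn_exp_neg_mul_Ioi {z : ℝ} (hz : 0 < z) :
    IntegrableOn (fun x => exp (-(z * x))) (Ioi 0) := by
  simpa [neg_mul] using integrableOn_exp_mul_Ioi (neg_lt_zero.2 hz) 0

lemma one_sub_exp_neg_pos {x : ℝ} (hx : 0 < x) : 0 < 1 - exp (-x) :=
  sub_pos.2 (exp_lt_one_iff.2 (neg_lt_zero.2 hx))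

lemma one_sub_exp_neg_le (x : ℝ) : 1 - exp (-x) ≤ x := by
  linarith [one_sub_le_exp_neg x]

lemma integrableOn_inv_mul_exp_neg_sub {a b : ℝ} (ha : 0 < a) (hb : 0 < b) :
    IntegrableOn (fun x => x⁻¹ * (exp (-(a * x)) - exp (-(b * x)))) (Ioi 0) := by
  wlog hab : a ≤ b generalizing a b
  · exact (this hb ha (le_of_not_ge hab)).neg.congr_fun
      (fun x _ => by simp only [Pi.neg_apply]; ring) measurableSet_Ioi
  refine ((integrableOn_exp_neg_mul_Ioi ha).const_mul (b - a)).mono' ?_ ?_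
  · exact (continuousOn_inv₀.mono fun x hx => ne_of_gt hx).mul (by fun_prop)
      |>.aestronglyMeasurable measurableSet_Ioi
  · filter_upwards [ae_restrict_mem measurableSet_Ioi] with x (hx : 0 < x)
    have hsplit : exp (-(b * x)) = exp (-(a * x)) * exp (-((b - a) * x)) := by
      rw [← exp_add]; ring_nf
    have hdiff_nonneg : 0 ≤ exp (-(a * x)) - exp (-(b * x)) :=
      sub_nonneg.2 (exp_le_exp.2 (by nlinarith))
    have hdiff_le : exp (-(a * x)) - exp (-(b * x)) ≤ exp (-(a * x)) * ((b - a) * x) := by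
      rw [hsplit, ← mul_one_sub]
      exact mul_le_mul_of_nonneg_left (one_sub_exp_neg_le _) (exp_pos _).le
    rw [norm_mul, norm_inv, Real.norm_of_nonneg hx.le, Real.norm_of_nonneg hdiff_nonneg,
      inv_mul_le_iff₀ hx]
    linarith

lemma integral_inv_mul_exp_neg_sub {a b : ℝ} (ha : 0 < a) (hb : 0 < b) :
    ∫ x in Ioi 0, x⁻¹ * (exp (-(a * x)) - exp (-(b * x))) = log (b / a) := by
  have hcont : Continuous fun x => exp (-x) := by fun_prop
  have h0 : Tendsto (fun x => exp (-x)) (𝓝[>] 0) (𝓝 1) := by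
    simpa using (hcont.tendsto 0).mono_left nhdsWithin_le_nhds
  simpa using Frullani.integral_Ioi_eq (hcont.locallyIntegrable.locallyIntegrableOn _) ha hb h0
    tendsto_exp_neg_atTop_nhds_zero
    (by simpa using integrableOn_inv_mul_exp_neg_sub ha hb)

lemma sum_range_choose_mul_neg_one_pow_mul_log_one_add_div {z : ℝ} (hz : 0 < z) {n : ℕ}
    (hn : n ≠ 0) :
    ∑ k ∈ Finset.range (n + 1), (n.choose k : ℝ) * (-1) ^ k * log (1 + k / z) =
      -∫ x in Ioi 0, x⁻¹ * (exp (-(z * x)) * (1 - exp (-x)) ^ n) := by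
  have hlog (k : ℕ) :
      log (1 + k / z) = ∫ x in Ioi 0, x⁻¹ * (exp (-(z * x)) - exp (-((z + k) * x))) := by
    rw [integral_inv_mul_exp_neg_sub hz (by positivity), add_div, div_self hz.ne']
  simp_rw [hlog, ← integral_const_mul]
  rw [← integral_finsetSum _ fun k _ =>
    (integrableOn_inv_mul_exp_neg_sub hz (by positivity)).const_mul _, ← integral_neg]
  refine setIntegral_congr_fun measurableSet_Ioi fun x _ => ?_
  have hexp (k : ℕ) : exp (-((z + k) * x)) = exp (-(z * x)) * exp (-x) ^ k := by
    rw [← exp_nat_mul, ← exp_add]; ring_nf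
  simp only [hexp, ← mul_one_sub]
  calc _ = x⁻¹ * exp (-(z * x)) * ∑ k ∈ Finset.range (n + 1),
          (n.choose k : ℝ) * (-1) ^ k * (1 - exp (-x) ^ k) := by
        rw [Finset.mul_sum]
        exact Finset.sum_congr rfl fun k _ => by ring
    _ = _ := by
        rw [sum_range_choose_mul_neg_one_pow_mul_one_sub_pow hn]
        ring

noncomputable def digammaKernel (x : ℝ) : ℝ := 1 / x - 1 / (1 - exp (-x))

lemma abs_digammaKernel_le_one {x : ℝ} (hx : 0 < x) : |digammaKernel x| ≤ 1 := by
  have ht := one_sub_exp_neg_pos hx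
  rw [digammaKernel, abs_le]
  refine ⟨?_, by linarith [one_div_le_one_div_of_le ht (one_sub_exp_neg_le x)]⟩
  have hexp : exp (-x) * (x + 1) ≤ 1 :=
    calc exp (-x) * (x + 1) ≤ exp (-x) * exp x :=
          mul_le_mul_of_nonneg_left (add_one_le_exp x) (exp_pos _).le
      _ = 1 := by rw [← exp_add, neg_add_cancel, exp_zero]
  rw [div_sub_div _ _ hx.ne' ht.ne', le_div_iff₀ (by positivity)]
  nlinarith

lemma continuousOn_digammaKernel : ContinuousOn digammaKernel (Ioi 0) :=
  (continuousOn_const.div continuousOn_id fun _ hx => ne_of_gt hx).sub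
    (continuousOn_const.div (by fun_prop) fun _ hx => (one_sub_exp_neg_pos hx).ne')

lemma norm_digammaKernel_mul_exp_neg_mul_le {x : ℝ} (hx : 0 < x) (z : ℝ) :
    ‖digammaKernel x * exp (-(z * x))‖ ≤ exp (-(z * x)) := by
  rw [norm_mul, norm_of_nonneg (exp_pos _).le]
  exact mul_le_of_le_one_left (exp_pos _).le (abs_digammaKernel_le_one hx)

lemma integrableOn_digammaKernel_mul_exp_neg_mul {z : ℝ} (hz : 0 < z) :
    IntegrableOn (fun x => digammaKernel x * exp (-(z * x))) (Ioi 0) := by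
  refine (integrableOn_exp_neg_mul_Ioi hz).mono'
    ((continuousOn_digammaKernel.mul (by fun_prop)).aestronglyMeasurable measurableSet_Ioi) ?_
  filter_upwards [ae_restrict_mem measurableSet_Ioi] with x hx
  exact norm_digammaKernel_mul_exp_neg_mul_le hx z

lemma abs_integral_digammaKernel_mul_exp_neg_mul_le {z : ℝ} (hz : 0 < z) :
    |∫ x in Ioi 0, digammaKernel x * exp (-(z * x))| ≤ z⁻¹ := by
  rw [← integral_exp_neg_mul_Ioi hz, ← norm_eq_abs]
  refine norm_integral_le_of_norm_le (integrableOn_exp_neg_mul_Ioi hz) ?_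
  filter_upwards [ae_restrict_mem measurableSet_Ioi] with x hx
  exact norm_digammaKernel_mul_exp_neg_mul_le hx z

lemma integral_digammaKernel_mul_exp_neg_mul_add_one {z : ℝ} (hz : 0 < z) :
    ∫ x in Ioi 0, digammaKernel x * exp (-((z + 1) * x)) =
      (∫ x in Ioi 0, digammaKernel x * exp (-(z * x))) - log ((z + 1) / z) + z⁻¹ := by
  have hz1 : 0 < z + 1 := by linarith
  have hdiff : (∫ x in Ioi 0, digammaKernel x * exp (-(z * x))) -
      ∫ x in Ioi 0, digammaKernel x * exp (-((z + 1) * x)) =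
      (∫ x in Ioi 0, x⁻¹ * (exp (-(z * x)) - exp (-((z + 1) * x)))) -
        ∫ x in Ioi 0, exp (-(z * x)) := by
    rw [← integral_sub (integrableOn_digammaKernel_mul_exp_neg_mul hz)
        (integrableOn_digammaKernel_mul_exp_neg_mul hz1),
      ← integral_sub (integrableOn_inv_mul_exp_neg_sub hz hz1) (integrableOn_exp_neg_mul_Ioi hz)]
    refine setIntegral_congr_fun measurableSet_Ioi fun x (hx : 0 < x) => ?_
    have ht := (one_sub_exp_neg_pos hx).ne'
    have hexp : exp (-((z + 1) * x)) = exp (-(z * x)) * exp (-x) := by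
      rw [← exp_add]; ring_nf
    simp only [digammaKernel, hexp]
    field_simp
  rw [integral_inv_mul_exp_neg_sub hz hz1, integral_exp_neg_mul_Ioi hz] at hdiff
  linarith

lemma hasDerivAt_log_Gamma {z : ℝ} (hz : 0 < z) :
    HasDerivAt (fun x => log (Gamma x)) (digamma z) z :=
  (differentiableAt_Gamma fun m => ((neg_nonpos.2 m.cast_nonneg).trans_lt hz).ne').hasDerivAt.log
    (Gamma_pos_of_pos hz).ne'

lemma digamma_add_one {z : ℝ} (hz : 0 < z) : digamma (z + 1) = digamma z + z⁻¹ := by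
  have hshift : HasDerivAt (fun x => log (Gamma (x + 1))) (digamma (z + 1)) z :=
    (hasDerivAt_log_Gamma (by linarith)).comp_add_const z 1
  have hsum : HasDerivAt (fun x => log (Gamma x) + log x) (digamma z + z⁻¹) z :=
    (hasDerivAt_log_Gamma hz).add (hasDerivAt_log hz.ne')
  refine hshift.unique (hsum.congr_of_eventuallyEq ?_)
  filter_upwards [eventually_gt_nhds hz] with x hx
  rw [Gamma_add_one hx.ne', log_mul hx.ne' (Gamma_pos_of_pos hx).ne', add_comm]

lemma slope_log_Gamma {z : ℝ} (hz : 0 < z) : slope (fun x => log (Gamma x)) z (z + 1) = log z := by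
  rw [slope_def_field, Gamma_add_one hz.ne', log_mul hz.ne' (Gamma_pos_of_pos hz).ne']
  simp

lemma log_le_digamma_add_one {z : ℝ} (hz : 0 < z) : log z ≤ digamma (z + 1) := by
  rw [← slope_log_Gamma hz]
  exact convexOn_log_Gamma.slope_le_of_hasDerivAt hz (by simp; linarith) (by linarith)
    (hasDerivAt_log_Gamma (by linarith))

lemma digamma_add_one_le_log {z : ℝ} (hz : 0 < z) : digamma (z + 1) ≤ log (z + 1) := by
  have hz1 : 0 < z + 1 := by linarith
  rw [← slope_log_Gamma hz1]
  exact convexOn_log_Gamma.le_slope_of_hasDerivAt hz1 (by simp; linarith) (by linarith)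
    (hasDerivAt_log_Gamma hz1)

lemma tendsto_digamma_sub_log_atTop : Tendsto (fun z => digamma z - log z) atTop (𝓝 0) := by
  refine tendsto_of_tendsto_of_tendsto_of_le_of_le' (tendsto_log_comp_add_sub_log (-1))
    tendsto_const_nhds ?_ ?_ <;> filter_upwards [eventually_gt_atTop 1] with z hz
  · simpa [← sub_eq_add_neg] using log_le_digamma_add_one (z := z - 1) (by linarith)
  · simpa using digamma_add_one_le_log (z := z - 1) (by linarith)

lemma eq_zero_of_add_one_eq_of_tendsto {f : ℝ → ℝ} (hf : ∀ z, 0 < z → f (z + 1) = f z)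
    (hlim : Tendsto f atTop (𝓝 0)) {z : ℝ} (hz : 0 < z) : f z = 0 := by
  have hconst (n : ℕ) : f (z + n) = f z := by
    induction n with
    | zero => simp
    | succ n ih => rw [Nat.cast_succ, ← add_assoc, hf _ (by positivity), ih]
  refine tendsto_nhds_unique ?_ (hlim.comp (tendsto_atTop_add_const_left atTop z
    tendsto_natCast_atTop_atTop))
  simp only [Function.comp_def, hconst, tendsto_const_nhds]

lemma digamma_sub_log_eq_integral {z : ℝ} (hz : 0 < z) :
    digamma z - log z = ∫ x in Ioi 0, digammaKernel x * exp (-(z * x)) := by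
  rw [← sub_eq_zero]
  refine eq_zero_of_add_one_eq_of_tendsto (f := fun z =>
    digamma z - log z - ∫ x in Ioi 0, digammaKernel x * exp (-(z * x))) (fun w hw => ?_) ?_ hz
  · rw [digamma_add_one hw, integral_digammaKernel_mul_exp_neg_mul_add_one hw,
      log_div (by linarith) hw.ne']
    ring
  · have hint : Tendsto (fun z => ∫ x in Ioi 0, digammaKernel x * exp (-(z * x))) atTop (𝓝 0) :=
      squeeze_zero_norm' (by filter_upwards [eventually_gt_atTop 0] with w hw
        using abs_integral_digammaKernel_mul_exp_neg_mul_le hw) tendsto_inv_atTop_zero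
    simpa using tendsto_digamma_sub_log_atTop.sub hint

lemma hasSum_one_sub_exp_neg_pow_div {x : ℝ} (hx : 0 < x) :
    HasSum (fun n : ℕ => (1 - exp (-x)) ^ (n + 1) / (n + 2)) (x / (1 - exp (-x)) - 1) := by
  set t := 1 - exp (-x)
  have ht : 0 < t := one_sub_exp_neg_pos hx
  have hlog : HasSum (fun n : ℕ => t ^ (n + 1) / (n + 1)) x := by
    have habs : |t| < 1 := by rw [abs_of_pos ht]; linarith [exp_pos (-x)]
    simpa [t] using hasSum_pow_div_log_of_abs_lt_one habs
  have hshift : HasSum (fun n : ℕ => t ^ (n + 2) / (n + 2)) (x - t) := by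
    simpa [add_assoc, one_add_one_eq_two] using (hasSum_nat_add_iff' 1).2 hlog
  have hterm : (fun n : ℕ => t ^ (n + 1) / (n + 2)) = fun n : ℕ => t ^ (n + 2) / (n + 2) / t := by
    ext n; field_simp; ring
  rw [hterm, show x / t - 1 = (x - t) / t by field_simp]
  exact hshift.div_const t

lemma hasSum_integral_inv_mul_exp_neg_mul_one_sub_exp_neg_pow {z : ℝ} (hz : 0 < z) :
    HasSum
      (fun n : ℕ => (∫ x in Ioi 0, x⁻¹ * (exp (-(z * x)) * (1 - exp (-x)) ^ (n + 1))) / (n + 2))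
      (-∫ x in Ioi 0, digammaKernel x * exp (-(z * x))) := by
  simp_rw [← integral_div, ← integral_neg]
  refine hasSum_integral_of_nonneg (fun n => ?_) (fun n => ?_)
    (integrableOn_digammaKernel_mul_exp_neg_mul hz).neg ?_
  · exact ((continuousOn_inv₀.mono fun x hx => ne_of_gt hx).mul (by fun_prop)).div_const _
      |>.aestronglyMeasurable measurableSet_Ioi
  · filter_upwards [ae_restrict_mem measurableSet_Ioi] with x (hx : 0 < x)
    have := (one_sub_exp_neg_pos hx).le
    positivity
  · filter_upwards [ae_restrict_mem measurableSet_Ioi] with x (hx : 0 < x)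
    have hsum := (hasSum_one_sub_exp_neg_pow_div hx).mul_left (x⁻¹ * exp (-(z * x)))
    have ht := (one_sub_exp_neg_pos hx).ne'
    have hterm : (fun n : ℕ => x⁻¹ * exp (-(z * x)) * ((1 - exp (-x)) ^ (n + 1) / (n + 2))) =
        fun n : ℕ => x⁻¹ * (exp (-(z * x)) * (1 - exp (-x)) ^ (n + 1)) / (n + 2) := by
      ext n; ring
    have hval : x⁻¹ * exp (-(z * x)) * (x / (1 - exp (-x)) - 1) =
        -(digammaKernel x * exp (-(z * x))) := by
      simp only [digammaKernel]
      field_simp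
      ring
    rwa [hterm, hval] at hsum

theorem digamma_binomial_sum (z : ℝ) (hz : 0 < z) :
    HasSum
      (fun n : ℕ => (1 / ((n : ℝ) + 1)) *
        ∑ k ∈ Finset.range (n + 1),
          (n.choose k : ℝ) * (-1) ^ k * Real.log (1 + k / z))
      (digamma z - Real.log z) := by
  rw [← hasSum_nat_add_iff' 1, digamma_sub_log_eq_integral hz]
  convert (hasSum_integral_inv_mul_exp_neg_mul_one_sub_exp_neg_pow hz).neg using 1
  · ext n
    rw [sum_range_choose_mul_neg_one_pow_mul_log_one_add_div hz n.succ_ne_zero]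
    push_cast
    ring
  · simp
end
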